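/- arXiv:1005.1197 — 2 statements merged into one kernel-verified Lean document; each statement's English description precedes it below -/
import Mathlib

section
/- Let 𝒮 be a linear space of functions analytic on ℂ⁺ closed under the difference-quotient operators D_w S(z) = (S(z) − S(w))/(z − w) for every w ∈ ℂ⁺. If 𝒮 is finite-dimensional, then every element of 𝒮 is a rational function. -/
/-!
Fix `w = i` and iterate a difference quotient: `F₀ = f` and `F_{k+1}(z) (z - w) = F_k(z) - F_k(w)`.
Telescoping gives `F_k(z) (z - w)^k = f(z) - T_k(z)` with `T_k(z) = ∑_{j<k} F_j(w) (z - w)^j`.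
The `F_k` lie in the finite-dimensional space, so some relation `∑_{k ≤ m} g_k F_k = 0` has
`g_m ≠ 0`; multiplying it by `(z - w)^m` gives `f Q = P` for polynomials `P`, `Q` with
`Q(w) = g_m ≠ 0`.
-/

open Polynomial Finset

theorem exists_sum_range_smul_eq_zero {R M : Type*} [Ring R] [StrongRankCondition R]
    [AddCommGroup M] [Module R M] [Module.Finite R M] (v : ℕ → M) :
    ∃ (m : ℕ) (g : ℕ → R), g m ≠ 0 ∧ ∑ k ∈ range (m + 1), g k • v k = 0 := by
  obtain ⟨l, hl, hl0⟩ : ∃ l : ℕ →₀ R, Finsupp.linearCombination R v l = 0 ∧ l ≠ 0 := by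
    simpa [linearIndependent_iff] using Module.Finite.not_linearIndependent_of_infinite (R := R) v
  have hne : l.support.Nonempty := Finsupp.support_nonempty_iff.mpr hl0
  refine ⟨l.support.max' hne, l, Finsupp.mem_support_iff.mp (l.support.max'_mem hne), ?_⟩
  rw [← hl, Finsupp.linearCombination_apply, Finsupp.sum]
  refine (sum_subset (fun k hk => mem_range_succ_iff.mpr (l.support.le_max' k hk)) ?_).symm
  intro k _ hk
  rw [Finsupp.notMem_support_iff.mp hk, zero_smul]

theorem mul_pow_eq_sub_sum_of_mul_eq_sub {R : Type*} [CommRing R] {x y : ℕ → R} {t : R}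
    (h : ∀ k, x (k + 1) * t = x k - y k) (k : ℕ) :
    x k * t ^ k = x 0 - ∑ j ∈ range k, y j * t ^ j := by
  induction k with
  | zero => simp
  | succ k ih =>
    rw [sum_range_succ]
    linear_combination t ^ k * h k + ih

theorem mul_sum_eq_sum_of_mul_eq_sub {R : Type*} [CommRing R] {x y g : ℕ → R} {t : R}
    (h : ∀ k, x (k + 1) * t = x k - y k) {m : ℕ} (hrel : ∑ k ∈ range (m + 1), g k * x k = 0) :
    x 0 * ∑ k ∈ range (m + 1), g k * t ^ (m - k)
      = ∑ k ∈ range (m + 1), g k * t ^ (m - k) * ∑ j ∈ range k, y j * t ^ j := by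
  have hterm : ∀ k ∈ range (m + 1), g k * x k * t ^ m
      = g k * t ^ (m - k) * (x 0 - ∑ j ∈ range k, y j * t ^ j) := by
    intro k hk
    rw [← mul_pow_eq_sub_sum_of_mul_eq_sub h, ← pow_sub_mul_pow t (mem_range_succ_iff.mp hk)]
    ring
  rw [← sub_eq_zero, mul_sum, ← sum_sub_distrib, ← zero_mul (t ^ m), ← hrel, sum_mul]
  refine sum_congr rfl fun k hk => ?_
  rw [hterm k hk]; ring

theorem exists_eq_div_of_sum_mul_eq_zero {K : Type*} [Field K] {U : Set K} {w : K}
    {F : ℕ → K → K} (hF : ∀ k, ∀ z ∈ U, F (k + 1) z * (z - w) = F k z - F k w)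
    {m : ℕ} {g : ℕ → K} (hg : g m ≠ 0) (hrel : ∀ z ∈ U, ∑ k ∈ range (m + 1), g k * F k z = 0) :
    ∃ P Q : K[X], Q ≠ 0 ∧ ∀ z ∈ U, Q.eval z ≠ 0 → F 0 z = P.eval z / Q.eval z := by
  set Q : K[X] := ∑ k ∈ range (m + 1), C (g k) * (X - C w) ^ (m - k)
  set P : K[X] := ∑ k ∈ range (m + 1),
    C (g k) * (X - C w) ^ (m - k) * ∑ j ∈ range k, C (F j w) * (X - C w) ^ j
  have hQw : Q.eval w = g m := by
    rw [eval_finsetSum, sum_range_succ, sum_eq_zero fun k hk => ?_]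
    · simp
    · have : m - k ≠ 0 := by rw [mem_range] at hk; omega
      simp [this]
  refine ⟨P, Q, fun hQ => hg (by rw [← hQw, hQ, eval_zero]), fun z hz hQz => ?_⟩
  refine eq_div_of_mul_eq hQz ?_
  simpa [Q, P, eval_finsetSum] using
    mul_sum_eq_sum_of_mul_eq_sub (x := fun k => F k z) (y := fun k => F k w) (t := z - w)
      (fun k => hF k z hz) (hrel z hz)

theorem stmt16_general (S : Submodule ℂ (ℂ → ℂ))
    (hdq : ∀ f ∈ S, ∀ w : ℂ, 0 < w.im → ∃ g ∈ S,
      ∀ z : ℂ, 0 < z.im → z ≠ w → g z = (f z - f w) / (z - w))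
    (hfd : FiniteDimensional ℂ S) :
    ∀ f ∈ S, ∃ P Q : Polynomial ℂ, Q ≠ 0 ∧
      ∀ z : ℂ, 0 < z.im → Q.eval z ≠ 0 → f z = P.eval z / Q.eval z := by
  intro f hf
  have hI : 0 < Complex.I.im := by simp
  have hDQ : ∀ u : S, ∃ v : S, ∀ z : ℂ, 0 < z.im → z ≠ Complex.I →
      (v : ℂ → ℂ) z = ((u : ℂ → ℂ) z - (u : ℂ → ℂ) Complex.I) / (z - Complex.I) := fun u => by
    obtain ⟨v, hv, h⟩ := hdq u u.2 Complex.I hI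
    exact ⟨⟨v, hv⟩, h⟩
  choose D hD using hDQ
  obtain ⟨m, g, hg, hrel⟩ := exists_sum_range_smul_eq_zero (R := ℂ) fun k => D^[k] ⟨f, hf⟩
  refine exists_eq_div_of_sum_mul_eq_zero (U := {z | 0 < z.im}) (w := Complex.I)
    (F := fun k => (D^[k] ⟨f, hf⟩ : ℂ → ℂ)) (fun k z hz => ?_) hg
    (fun z _ => by simpa using congrFun (congrArg Subtype.val hrel) z)
  by_cases hzI : z = Complex.I
  · simp [hzI]  -- at `z = i` both sides vanish
  · rw [Function.iterate_succ_apply', hD _ z hz hzI, div_mul_cancel₀ _ (sub_ne_zero.mpr hzI)]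

/-- A finite-dimensional linear space of functions analytic on `ℂ⁺` closed under all
difference-quotient operators `D_w S(z) = (S(z) − S(w))/(z − w)`, `w ∈ ℂ⁺`, consists of
rational functions. -/
theorem stmt16 (S : Submodule ℂ (ℂ → ℂ))
    (han : ∀ f ∈ S, DifferentiableOn ℂ f {z : ℂ | 0 < z.im})
    (hdq : ∀ f ∈ S, ∀ w : ℂ, 0 < w.im → ∃ g ∈ S,
      ∀ z : ℂ, 0 < z.im → z ≠ w → g z = (f z - f w) / (z - w))
    (hfd : FiniteDimensional ℂ S) :
    ∀ f ∈ S, ∃ P Q : Polynomial ℂ, Q ≠ 0 ∧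
      ∀ z : ℂ, 0 < z.im → Q.eval z ≠ 0 → f z = P.eval z / Q.eval z :=
  stmt16_general S hdq hfd
end

section
/- Let (t_n) ⊂ ℝ, b_n > 0, and assume polynomials are dense in ℓ²(T,b) = {f : T → ℂ : ∑|f(t_n)|² b_n < ∞} and (c_n) satisfies ∑|c_n|²/b_n < ∞ and ∑_n |c_n||t_n|^k < ∞ for every k ≥ 0. Let N be the least nonnegative integer with ∑_n c_n t_n^N ≠ 0 (which exists by density of polynomials). Then ∑_n c_n/(iy − t_n) = (∑_n c_n t_n^N)/(iy)^{N+1} + O(y^{−N−2}) as y → +∞; in particular |∑_n c_n/(iy − t_n)| ≥ c·y^{−N−1} for large y. -/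
/-!
Expanding `(u - z)⁻¹` geometrically to order `N` in `z / u` and summing against `c` gives
`∑ cₙ/(u - zₙ) = ∑_{k ≤ N} mₖ / u^(k+1) + R(u)` with moments `mₖ = ∑ cₙ zₙ^k`; for `u = iy` one has
`|iy - tₙ| ≥ y`, so `|R(iy)| ≤ (∑ |cₙ| |tₙ|^(N+1)) / y^(N+2)`. The vanishing of the moments below `N`
leaves `m_N / (iy)^(N+1)` as the leading term, and as `m_N ≠ 0` it dominates the error for large `y`.
-/

open Complex Finset

lemma inv_sub_eq_sum_add {K : Type*} [Field K] {u τ : K} (hu : u ≠ 0) (huτ : u - τ ≠ 0) :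
    ∀ m : ℕ, (u - τ)⁻¹ = ∑ k ∈ range m, τ ^ k / u ^ (k + 1) + τ ^ m / (u ^ m * (u - τ))
  | 0 => by simp
  | m + 1 => by
    rw [inv_sub_eq_sum_add hu huτ m, sum_range_succ, add_assoc]
    congr 1
    field_simp
    ring

lemma norm_mul_pow_div_pow_mul_sub_le {a w u : ℂ} (N : ℕ) (hu : u ≠ 0) (hdist : ‖u‖ ≤ ‖u - w‖) :
    ‖a * w ^ (N + 1) / (u ^ (N + 1) * (u - w))‖ ≤ ‖a‖ * ‖w‖ ^ (N + 1) / ‖u‖ ^ (N + 2) := by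
  rw [norm_div, norm_mul, norm_mul, norm_pow, norm_pow, pow_succ ‖u‖ (N + 1)]
  gcongr

theorem norm_tsum_div_sub_sub_sum_moments_le (c z : ℕ → ℂ) (N : ℕ)
    (hc : ∀ k ≤ N + 1, Summable fun n => ‖c n‖ * ‖z n‖ ^ k)
    {u : ℂ} (hu : u ≠ 0) (hdist : ∀ n, ‖u‖ ≤ ‖u - z n‖) :
    ‖(∑' n, c n / (u - z n)) - ∑ k ∈ range (N + 1), (∑' n, c n * z n ^ k) / u ^ (k + 1)‖ ≤
      (∑' n, ‖c n‖ * ‖z n‖ ^ (N + 1)) / ‖u‖ ^ (N + 2) := by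
  have huz : ∀ n, u - z n ≠ 0 := fun n =>
    norm_pos_iff.mp ((norm_pos_iff.mpr hu).trans_le (hdist n))
  have hmoment : ∀ k ∈ range (N + 1), Summable fun n => c n * z n ^ k / u ^ (k + 1) :=
    fun k hk => by
      have hk' : k ≤ N + 1 := (mem_range_succ_iff.mp hk).trans N.le_succ
      have hsum : Summable fun n => c n * z n ^ k :=
        .of_norm (by simpa only [norm_mul, norm_pow] using hc k hk')
      exact hsum.div_const _
  set R : ℕ → ℂ := fun n => c n * z n ^ (N + 1) / (u ^ (N + 1) * (u - z n))
  have hR : Summable fun n => ‖R n‖ :=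
    ((hc (N + 1) le_rfl).div_const _).of_nonneg_of_le (fun _ => norm_nonneg _)
      fun n => norm_mul_pow_div_pow_mul_sub_le N hu (hdist n)
  have hexpand : ∀ n, c n / (u - z n) = ∑ k ∈ range (N + 1), c n * z n ^ k / u ^ (k + 1) + R n :=
    fun n => by
      rw [div_eq_mul_inv, inv_sub_eq_sum_add hu (huz n) (N + 1), mul_add, mul_sum]
      simp only [R, mul_div_assoc]
  have hsplit : (∑' n, c n / (u - z n)) =
      ∑ k ∈ range (N + 1), (∑' n, c n * z n ^ k) / u ^ (k + 1) + ∑' n, R n := by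
    rw [tsum_congr hexpand, (summable_sum hmoment).tsum_add hR.of_norm,
      Summable.tsum_finsetSum hmoment]
    simp only [tsum_div_const]
  rw [hsplit, add_sub_cancel_left, ← tsum_div_const]
  exact (norm_tsum_le_tsum_norm hR).trans <| hR.tsum_le_tsum
    (fun n => norm_mul_pow_div_pow_mul_sub_le N hu (hdist n)) ((hc (N + 1) le_rfl).div_const _)

lemma le_norm_I_mul_sub_ofReal {y : ℝ} (hy : 0 ≤ y) (τ : ℝ) : ‖I * y‖ ≤ ‖I * y - τ‖ := by
  simpa [abs_of_nonneg hy] using abs_im_le_norm (I * y - τ)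

lemma div_pow_succ_le_norm_of_norm_sub_le {S M : ℂ} {C y : ℝ} {N : ℕ} (hy : 0 < y)
    (hCy : 2 * C ≤ ‖M‖ * y) (hS : ‖S - M / (I * y) ^ (N + 1)‖ ≤ C / y ^ (N + 2)) :
    ‖M‖ / 2 / y ^ (N + 1) ≤ ‖S‖ := by
  have hlead : ‖M / (I * y) ^ (N + 1)‖ = ‖M‖ / y ^ (N + 1) := by
    simp [norm_pow, abs_of_pos hy]
  have herr : C / y ^ (N + 2) ≤ ‖M‖ / 2 / y ^ (N + 1) := by
    rw [div_le_div_iff₀ (by positivity) (by positivity), pow_succ y (N + 1)]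
    nlinarith [pow_pos hy (N + 1)]
  have htriangle := norm_sub_norm_le (M / (I * y) ^ (N + 1)) S
  rw [norm_sub_rev, hlead] at htriangle
  have hhalf : ‖M‖ / y ^ (N + 1) = 2 * (‖M‖ / 2 / y ^ (N + 1)) := by ring
  linarith

theorem stmt18_general (t : ℕ → ℝ)
    (c : ℕ → ℂ)
    (hc2 : ∀ k : ℕ, Summable (fun n => ‖c n‖ * |t n| ^ k))
    (N : ℕ) (hN : ∑' n, c n * ((t n : ℂ)) ^ N ≠ 0)
    (hNmin : ∀ m : ℕ, m < N → ∑' n, c n * ((t n : ℂ)) ^ m = 0) :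
    (∃ C : ℝ, 0 < C ∧ ∃ y₀ : ℝ, ∀ y : ℝ, y₀ ≤ y →
      ‖(∑' n, c n / (I * (y : ℂ) - (t n : ℂ))) -
          (∑' n, c n * ((t n : ℂ)) ^ N) / (I * (y : ℂ)) ^ (N + 1)‖ ≤ C / y ^ (N + 2)) ∧
    ∃ c₀ : ℝ, 0 < c₀ ∧ ∃ y₁ : ℝ, ∀ y : ℝ, y₁ ≤ y →
      c₀ / y ^ (N + 1) ≤ ‖∑' n, c n / (I * (y : ℂ) - (t n : ℂ))‖ := by
  set C := ∑' n, ‖c n‖ * |t n| ^ (N + 1)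
  set M := ∑' n, c n * ((t n : ℂ)) ^ N
  have hC : 0 ≤ C := tsum_nonneg fun n => by positivity
  have hM : 0 < ‖M‖ := norm_pos_iff.mpr hN
  have hleading : ∀ y : ℝ, ∑ k ∈ range (N + 1), (∑' n, c n * ((t n : ℂ)) ^ k) / (I * y) ^ (k + 1) =
      M / (I * y) ^ (N + 1) := fun y =>
    sum_eq_single_of_mem N (self_mem_range_succ N) fun k hk hkN => by
      rw [hNmin k (lt_of_le_of_ne (mem_range_succ_iff.mp hk) hkN), zero_div]
  have hexpansion : ∀ y : ℝ, 0 < y →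
      ‖(∑' n, c n / (I * (y : ℂ) - (t n : ℂ))) - M / (I * y) ^ (N + 1)‖ ≤ C / y ^ (N + 2) :=
    fun y hy => by
      have hmoments := norm_tsum_div_sub_sub_sum_moments_le c (fun n => t n) N (u := I * y)
        (fun k _ => by simpa using hc2 k) (by simpa using hy.ne')
        fun n => le_norm_I_mul_sub_ofReal hy.le (t n)
      simpa [hleading, abs_of_pos hy] using hmoments
  refine ⟨⟨C + 1, by linarith, 1, fun y hy => (hexpansion y (by linarith)).trans ?_⟩,
    ‖M‖ / 2, by positivity, max 1 (2 * C / ‖M‖), fun y hy => ?_⟩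
  · gcongr
    linarith
  · have hy0 : 0 < y := by linarith [le_max_left 1 (2 * C / ‖M‖)]
    have hCy : 2 * C ≤ ‖M‖ * y := by
      rw [← div_le_iff₀' hM]
      exact (le_max_right _ _).trans hy
    exact div_pow_succ_le_norm_of_norm_sub_le hy0 hCy (hexpansion y hy0)

/-- From the proof of Theorem 1.4: if polynomials are dense in `ℓ²(T,b)`,
`∑ |cₙ|²/bₙ < ∞`, `∑ |cₙ||tₙ|^k < ∞` for every `k`, and `N` is the least nonnegative
integer with `∑ cₙ tₙ^N ≠ 0`, then
`∑ cₙ/(iy − tₙ) = (∑ cₙ tₙ^N)/(iy)^{N+1} + O(y^{−N−2})` as `y → +∞`; in particular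
`|∑ cₙ/(iy − tₙ)| ≥ c₀ y^{−N−1}` for large `y`. -/
theorem stmt18 (t : ℕ → ℝ) (htinj : Function.Injective t)
    (b : ℕ → ℝ) (hb : ∀ n, 0 < b n)
    (hdense : ∀ a : ℕ → ℂ, Summable (fun n => ‖a n‖ ^ 2 * b n) →
      (∀ k : ℕ, ∑' n, a n * ((t n : ℂ)) ^ k * (b n : ℂ) = 0) → a = 0)
    (c : ℕ → ℂ) (hc1 : Summable (fun n => ‖c n‖ ^ 2 / b n))
    (hc2 : ∀ k : ℕ, Summable (fun n => ‖c n‖ * |t n| ^ k))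
    (N : ℕ) (hN : ∑' n, c n * ((t n : ℂ)) ^ N ≠ 0)
    (hNmin : ∀ m : ℕ, m < N → ∑' n, c n * ((t n : ℂ)) ^ m = 0) :
    (∃ C : ℝ, 0 < C ∧ ∃ y₀ : ℝ, ∀ y : ℝ, y₀ ≤ y →
      ‖(∑' n, c n / (I * (y : ℂ) - (t n : ℂ))) -
          (∑' n, c n * ((t n : ℂ)) ^ N) / (I * (y : ℂ)) ^ (N + 1)‖ ≤ C / y ^ (N + 2)) ∧
    ∃ c₀ : ℝ, 0 < c₀ ∧ ∃ y₁ : ℝ, ∀ y : ℝ, y₁ ≤ y →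
      c₀ / y ^ (N + 1) ≤ ‖∑' n, c n / (I * (y : ℂ) - (t n : ℂ))‖ :=
  stmt18_general t c hc2 N hN hNmin
end
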